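/- arXiv:1002.4388 — 2 statements merged into one kernel-verified Lean document; each statement's English description precedes it below -/
import Mathlib

section
/- (Optimality criterion, Eq. (3) of the QSD Duality Theorem.) Let σ be a Hermitian matrix such that σ − ρ_x is positive semidefinite for every x ∈ X and Re Tr(σ) = P_guess (the Lagrange operator). Then a POVM (E_x)_{x∈X} is optimal (attains P_guess) if and only if E_x σ = E_x ρ_x for every x ∈ X. -/
/-!
For any POVM `E`, `Tr σ - Σₓ Tr (Eₓ ρₓ) = Σₓ Tr (Eₓ (σ - ρₓ))`, and each summand is the trace of a
product of two positive semidefinite matrices, i.e. a squared Frobenius norm `‖S Rᴴ‖²` where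
`Eₓ = Rᴴ R`, `σ - ρₓ = Sᴴ S`. So `E` attains `Re Tr σ = P_guess` exactly when every summand
vanishes, i.e. when `Eₓ (σ - ρₓ) = 0` for all `x`.
-/

open scoped ComplexOrder

namespace Matrix

section Trace

variable {m k l R : Type*} [Fintype m] [Fintype k] [Fintype l] [CommRing R]

lemma trace_conjTranspose_mul_self_mul_conjTranspose_mul_self [StarRing R] (A : Matrix k m R)
    (B : Matrix l m R) : (Aᴴ * A * (Bᴴ * B)).trace = ((B * Aᴴ)ᴴ * (B * Aᴴ)).trace := by
  rw [conjTranspose_mul, conjTranspose_conjTranspose, Matrix.mul_assoc, trace_mul_comm]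
  simp only [Matrix.mul_assoc]

lemma trace_sub_sum_trace_mul_eq_sum [DecidableEq m] {X : Type*} [Fintype X]
    {E : X → Matrix m m R} (hE : ∑ x, E x = 1) (σ : Matrix m m R) (ρ : X → Matrix m m R) :
    σ.trace - ∑ x, (E x * ρ x).trace = ∑ x, (E x * (σ - ρ x)).trace := by
  have hσ : σ.trace = ∑ x, (E x * σ).trace := by
    rw [← trace_sum, ← Finset.sum_mul, hE, Matrix.one_mul]
  simp only [hσ, Matrix.mul_sub, trace_sub, Finset.sum_sub_distrib]

end Trace

variable {m 𝕜 : Type*} [Fintype m] [RCLike 𝕜]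

open scoped MatrixOrder in
lemma PosSemidef.exists_eq_conjTranspose_mul_self {A : Matrix m m 𝕜} (hA : A.PosSemidef) :
    ∃ R : Matrix m m 𝕜, A = Rᴴ * R := by
  classical
  exact CStarAlgebra.nonneg_iff_eq_star_mul_self.mp hA.nonneg

lemma PosSemidef.trace_mul_nonneg {A B : Matrix m m 𝕜} (hA : A.PosSemidef) (hB : B.PosSemidef) :
    0 ≤ (A * B).trace := by
  obtain ⟨R, rfl⟩ := hA.exists_eq_conjTranspose_mul_self
  obtain ⟨S, rfl⟩ := hB.exists_eq_conjTranspose_mul_self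
  rw [trace_conjTranspose_mul_self_mul_conjTranspose_mul_self]
  exact (posSemidef_conjTranspose_mul_self _).trace_nonneg

lemma PosSemidef.trace_mul_eq_zero_iff {A B : Matrix m m 𝕜} (hA : A.PosSemidef)
    (hB : B.PosSemidef) : (A * B).trace = 0 ↔ A * B = 0 := by
  refine ⟨fun h => ?_, fun h => by rw [h, trace_zero]⟩
  obtain ⟨R, rfl⟩ := hA.exists_eq_conjTranspose_mul_self
  obtain ⟨S, rfl⟩ := hB.exists_eq_conjTranspose_mul_self
  rw [trace_conjTranspose_mul_self_mul_conjTranspose_mul_self,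
    trace_conjTranspose_mul_self_eq_zero_iff] at h
  calc Rᴴ * R * (Sᴴ * S) = Rᴴ * (S * Rᴴ)ᴴ * S := by
        simp only [conjTranspose_mul, conjTranspose_conjTranspose, Matrix.mul_assoc]
    _ = 0 := by rw [h, conjTranspose_zero, Matrix.mul_zero, Matrix.zero_mul]

lemma re_sum_trace_mul_eq_re_trace_iff [DecidableEq m] {X : Type*} [Fintype X]
    {E ρ : X → Matrix m m 𝕜} {σ : Matrix m m 𝕜} (hE : ∀ x, (E x).PosSemidef) (hEsum : ∑ x, E x = 1)
    (hσ : ∀ x, (σ - ρ x).PosSemidef) :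
    RCLike.re (∑ x, (E x * ρ x).trace) = RCLike.re σ.trace ↔ ∀ x, E x * σ = E x * ρ x := by
  have hgap := trace_sub_sum_trace_mul_eq_sum hEsum σ ρ
  have hle : ∑ x, (E x * ρ x).trace ≤ σ.trace := by
    rw [← sub_nonneg, hgap]
    exact Finset.sum_nonneg fun x _ => (hE x).trace_mul_nonneg (hσ x)
  calc RCLike.re (∑ x, (E x * ρ x).trace) = RCLike.re σ.trace
        ↔ σ.trace - ∑ x, (E x * ρ x).trace = 0 := by
          rw [sub_eq_zero, RCLike.ext_iff (K := 𝕜),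
            and_iff_left (RCLike.le_iff_re_im.mp hle).2.symm, eq_comm]
    _ ↔ ∀ x, (E x * (σ - ρ x)).trace = 0 := by
          rw [hgap, Finset.sum_eq_zero_iff_of_nonneg fun x _ => (hE x).trace_mul_nonneg (hσ x)]
          simp only [Finset.mem_univ, true_implies]
    _ ↔ ∀ x, E x * σ = E x * ρ x := by
          refine forall_congr' fun x => ?_
          rw [(hE x).trace_mul_eq_zero_iff (hσ x), Matrix.mul_sub, sub_eq_zero]

end Matrix

theorem qsd_optimality_criterion_general {n : ℕ} {X : Type*} [Fintype X]
    (ρ : X → Matrix (Fin n) (Fin n) ℂ)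
    (σ : Matrix (Fin n) (Fin n) ℂ)
    (hfeas : ∀ x, (σ - ρ x).PosSemidef)
    (hσtr : (σ.trace).re =
      sSup {p : ℝ | ∃ G : X → Matrix (Fin n) (Fin n) ℂ,
        (∀ x, (G x).PosSemidef) ∧ (∑ x, G x) = 1 ∧
        p = ∑ x, ((G x * ρ x).trace).re})
    (E : X → Matrix (Fin n) (Fin n) ℂ)
    (hE : ∀ x, (E x).PosSemidef) (hEsum : (∑ x, E x) = 1) :
    ((∑ x, ((E x * ρ x).trace).re) =
      sSup {p : ℝ | ∃ G : X → Matrix (Fin n) (Fin n) ℂ,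
        (∀ x, (G x).PosSemidef) ∧ (∑ x, G x) = 1 ∧
        p = ∑ x, ((G x * ρ x).trace).re})
    ↔ (∀ x, E x * σ = E x * ρ x) := by
  rw [← hσtr, ← Complex.re_sum]
  exact Matrix.re_sum_trace_mul_eq_re_trace_iff hE hEsum hfeas

/-- Optimality criterion (Eq. (3) of the QSD duality theorem): if `σ` is the Lagrange
operator (Hermitian, feasible, with `Re Tr σ = P_guess`), then a POVM `E` is optimal
if and only if `E x * σ = E x * ρ x` for every `x`. -/
theorem qsd_optimality_criterion {n : ℕ} {X : Type*} [Fintype X]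
    (ρ : X → Matrix (Fin n) (Fin n) ℂ)
    (hρ : ∀ x, (ρ x).PosSemidef)
    (hρtr : (∑ x, (ρ x).trace) = 1)
    (σ : Matrix (Fin n) (Fin n) ℂ)
    (hσ : σ.IsHermitian)
    (hfeas : ∀ x, (σ - ρ x).PosSemidef)
    (hσtr : (σ.trace).re =
      sSup {p : ℝ | ∃ G : X → Matrix (Fin n) (Fin n) ℂ,
        (∀ x, (G x).PosSemidef) ∧ (∑ x, G x) = 1 ∧
        p = ∑ x, ((G x * ρ x).trace).re})
    (E : X → Matrix (Fin n) (Fin n) ℂ)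
    (hE : ∀ x, (E x).PosSemidef) (hEsum : (∑ x, E x) = 1) :
    ((∑ x, ((E x * ρ x).trace).re) =
      sSup {p : ℝ | ∃ G : X → Matrix (Fin n) (Fin n) ℂ,
        (∀ x, (G x).PosSemidef) ∧ (∑ x, G x) = 1 ∧
        p = ∑ x, ((G x * ρ x).trace).re})
    ↔ (∀ x, E x * σ = E x * ρ x) :=
  qsd_optimality_criterion_general ρ σ hfeas hσtr E hE hEsum
end

section
/- (Equiprobable qubit states and the minimal enclosing ball.) Let m ≥ 1 and let (ρ_x)_{x∈X}, |X| = m, be a discrimination problem on ℂ² in which each weighted state has trace 1/m, i.e. ρ_x = M(1/m, r_x) is positive semidefinite with r_x ∈ ℝ³. Then the maximal guessing probability equals P_guess = 1/m + inf_{s∈ℝ³} max_{x∈X} ‖s − r_x‖, i.e. 1/m plus the radius of the minimal enclosing ball of the points (r_x)_{x∈X}. -/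
open scoped ComplexOrder

/-- The Pauli matrices. -/
noncomputable def pauli1 : Matrix (Fin 2) (Fin 2) ℂ := !![0, 1; 1, 0]
noncomputable def pauli2 : Matrix (Fin 2) (Fin 2) ℂ := !![0, -Complex.I; Complex.I, 0]
noncomputable def pauli3 : Matrix (Fin 2) (Fin 2) ℂ := !![1, 0; 0, -1]

/-- The Bloch representation `M(p, r) = (1/2)(p·I + r₁σ₁ + r₂σ₂ + r₃σ₃)` for `r ∈ ℝ³`. -/
noncomputable def blochMat (p : ℝ) (r : EuclideanSpace ℝ (Fin 3)) :
    Matrix (Fin 2) (Fin 2) ℂ :=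
  (1/2 : ℂ) • ((p : ℂ) • (1 : Matrix (Fin 2) (Fin 2) ℂ)
    + (r 0 : ℂ) • pauli1 + (r 1 : ℂ) • pauli2 + (r 2 : ℂ) • pauli3)

open scoped RealInnerProductSpace Topology

/-!
Write each POVM element as `E x = M(P x, S x)`. Positivity is `‖S x‖ ≤ P x` and `∑ E x = 1` is
`∑ P x = 2`, `∑ S x = 0`, while the guessing probability is `1/m + ½ ∑ ⟪S x, r x⟫`. Because
`∑ S x = 0`, for every centre `s` this equals `1/m + ½ ∑ ⟪S x, r x - s⟫ ≤ 1/m + max_x ‖s - r x‖`.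
Conversely, the centre `c` of a minimal enclosing ball of radius `R` is a convex combination
`∑ λ x • r x` of the points on its boundary sphere (otherwise a direction separating `c` from their
convex hull moves `c` closer to all of them and shrinks the ball), and the POVM with `P x = 2 λ x`,
`S x = (2 λ x / R) • (r x - c)` attains `1/m + R`.
-/

lemma exists_weights_of_mem_convexHull_image {ι F : Type*} [Fintype ι] [AddCommGroup F]
    [Module ℝ F] {r : ι → F} {T : Set ι} {y : F} (hy : y ∈ convexHull ℝ (r '' T)) :
    ∃ w : ι → ℝ, 0 ≤ w ∧ ∑ x, w x = 1 ∧ (∀ x, w x ≠ 0 → x ∈ T) ∧ ∑ x, w x • r x = y := by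
  classical
  suffices convexHull ℝ (r '' T) ⊆ {y | ∃ w : ι → ℝ, 0 ≤ w ∧ ∑ x, w x = 1 ∧
      (∀ x, w x ≠ 0 → x ∈ T) ∧ ∑ x, w x • r x = y} from this hy
  refine convexHull_min ?_ ?_
  · rintro _ ⟨x, hx, rfl⟩
    refine ⟨Pi.single x 1, Pi.single_nonneg.2 zero_le_one, by simp, fun x' hx' => ?_, by simp⟩
    by_contra h
    exact hx' (Pi.single_eq_of_ne (by rintro rfl; exact h hx) 1)
  · rintro _ ⟨w, hw0, hw1, hwT, rfl⟩ _ ⟨w', hw0', hw1', hwT', rfl⟩ a b ha hb hab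
    refine ⟨a • w + b • w', add_nonneg (smul_nonneg ha hw0) (smul_nonneg hb hw0'), ?_,
      fun x hx => ?_, ?_⟩
    · simp [Finset.sum_add_distrib, ← Finset.mul_sum, hw1, hw1', hab]
    · by_contra h
      simp [not_imp_comm.1 (hwT x) h, not_imp_comm.1 (hwT' x) h] at hx
    · simp [add_smul, mul_smul, Finset.sum_add_distrib, Finset.smul_sum]

lemma sum_inner_sub_eq_sum_inner {ι E : Type*} [Fintype ι] [NormedAddCommGroup E]
    [InnerProductSpace ℝ E] (r : ι → E) {S : ι → E}
    (hS : ∑ x, S x = 0) (c : E) : ∑ x, ⟪S x, r x - c⟫ = ∑ x, ⟪S x, r x⟫ := by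
  simp [inner_sub_right, Finset.sum_sub_distrib, ← sum_inner, hS]

section MinimalEnclosingBall

variable {ι E : Type*} [Fintype ι] [Nonempty ι] [NormedAddCommGroup E]

def enclosingRadius (r : ι → E) (s : E) : ℝ :=
  Finset.univ.sup' Finset.univ_nonempty fun x => ‖s - r x‖

lemma norm_sub_le_enclosingRadius (r : ι → E) (s : E) (x : ι) :
    ‖s - r x‖ ≤ enclosingRadius r s :=
  Finset.le_sup' (fun x => ‖s - r x‖) (Finset.mem_univ x)

lemma enclosingRadius_nonneg (r : ι → E) (s : E) : 0 ≤ enclosingRadius r s :=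
  (norm_nonneg _).trans (norm_sub_le_enclosingRadius r s (Classical.arbitrary ι))

lemma exists_forall_enclosingRadius_le [ProperSpace E] (r : ι → E) :
    ∃ c, ∀ s, enclosingRadius r c ≤ enclosingRadius r s := by
  have hcont : Continuous (enclosingRadius r) :=
    Continuous.finset_sup'_apply _ fun x _ => by fun_prop
  obtain ⟨x₀⟩ := ‹Nonempty ι›
  refine hcont.exists_forall_le (Filter.tendsto_atTop_mono (fun s => ?_)
    (Filter.tendsto_atTop_add_const_right _ (-‖r x₀‖) tendsto_norm_cocompact_atTop))
  linarith [norm_sub_le_enclosingRadius r s x₀, norm_sub_norm_le s (r x₀)]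

lemma eventually_norm_sub_smul_lt [InnerProductSpace ℝ E] {v d : E} (h : 0 < ⟪d, v⟫) :
    ∀ᶠ ε in 𝓝[>] (0 : ℝ), ‖v - ε • d‖ < ‖v‖ := by
  have hδ : 0 < 2 * ⟪d, v⟫ / (‖d‖ ^ 2 + 1) := by positivity
  filter_upwards [Ioo_mem_nhdsGT hδ] with ε ⟨hε, hεδ⟩
  rw [lt_div_iff₀ (by positivity)] at hεδ
  refine lt_of_pow_lt_pow_left₀ 2 (norm_nonneg v) ?_
  rw [norm_sub_sq_real, real_inner_smul_right, norm_smul, Real.norm_of_nonneg hε.le,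
    real_inner_comm]
  nlinarith [sq_nonneg ‖d‖]

lemma exists_enclosingRadius_lt [InnerProductSpace ℝ E] {r : ι → E} {c d : E}
    (hd : ∀ x, ‖c - r x‖ = enclosingRadius r c → 0 < ⟪d, r x - c⟫) :
    ∃ s, enclosingRadius r s < enclosingRadius r c := by
  have hclose : ∀ x, ∀ᶠ ε in 𝓝[>] (0 : ℝ), ‖c + ε • d - r x‖ < enclosingRadius r c := by
    intro x
    rcases (norm_sub_le_enclosingRadius r c x).lt_or_eq with hlt | heq
    · have hcont : Continuous fun ε : ℝ => ‖c + ε • d - r x‖ := by fun_prop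
      have := hcont.tendsto 0
      simp only [zero_smul, add_zero] at this
      exact (this.eventually_lt_const hlt).filter_mono nhdsWithin_le_nhds
    · filter_upwards [eventually_norm_sub_smul_lt (hd x heq)] with ε hε
      rwa [← heq, ← norm_neg, neg_sub, ← norm_neg (c - r x), neg_sub,
        show r x - (c + ε • d) = r x - c - ε • d by abel]
  obtain ⟨ε, hε⟩ := (Filter.eventually_all.2 hclose).exists
  exact ⟨c + ε • d, (Finset.sup'_lt_iff _).2 fun x _ => hε x⟩

lemma mem_convexHull_farthest [InnerProductSpace ℝ E] [CompleteSpace E] {r : ι → E} {c : E}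
    (hc : ∀ s, enclosingRadius r c ≤ enclosingRadius r s) :
    c ∈ convexHull ℝ (r '' {x | ‖c - r x‖ = enclosingRadius r c}) := by
  by_contra hnot
  obtain ⟨φ, u, hφc, hφK⟩ := geometric_hahn_banach_point_closed (convex_convexHull ℝ _)
    ((Set.toFinite _).image r |>.isCompact_convexHull (𝕜 := ℝ)).isClosed hnot
  set d := (InnerProductSpace.toDual ℝ E).symm φ
  have hd : ∀ y, ⟪d, y⟫ = φ y := fun y => InnerProductSpace.toDual_symm_apply
  have hdescent : ∀ x, ‖c - r x‖ = enclosingRadius r c → 0 < ⟪d, r x - c⟫ := fun x hx => by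
    have := hφK _ (subset_convexHull ℝ _ ⟨x, hx, rfl⟩)
    rw [inner_sub_right, hd, hd]
    linarith
  obtain ⟨s, hs⟩ := exists_enclosingRadius_lt hdescent
  exact (hc s).not_gt hs

lemma sum_inner_le_mul_enclosingRadius [InnerProductSpace ℝ E] (r : ι → E) {P : ι → ℝ}
    {S : ι → E} (hSP : ∀ x, ‖S x‖ ≤ P x) (hS : ∑ x, S x = 0) (s : E) :
    ∑ x, ⟪S x, r x⟫ ≤ (∑ x, P x) * enclosingRadius r s := by
  calc ∑ x, ⟪S x, r x⟫ = ∑ x, ⟪S x, r x - s⟫ := (sum_inner_sub_eq_sum_inner r hS s).symm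
    _ ≤ ∑ x, ‖S x‖ * ‖r x - s‖ := Finset.sum_le_sum fun x _ => real_inner_le_norm _ _
    _ ≤ ∑ x, P x * enclosingRadius r s := Finset.sum_le_sum fun x _ =>
        mul_le_mul (hSP x) (norm_sub_rev (r x) s ▸ norm_sub_le_enclosingRadius r s x)
          (norm_nonneg _) ((norm_nonneg _).trans (hSP x))
    _ = (∑ x, P x) * enclosingRadius r s := (Finset.sum_mul ..).symm

lemma exists_sum_inner_eq_enclosingRadius [InnerProductSpace ℝ E] [CompleteSpace E]
    {r : ι → E} {c : E} (hc : ∀ s, enclosingRadius r c ≤ enclosingRadius r s) :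
    ∃ (P : ι → ℝ) (S : ι → E), (∀ x, ‖S x‖ ≤ P x) ∧ ∑ x, P x = 1 ∧ ∑ x, S x = 0 ∧
      ∑ x, ⟪S x, r x⟫ = enclosingRadius r c := by
  set R := enclosingRadius r c
  obtain ⟨w, hw0, hw1, hwT, hwc⟩ :=
    exists_weights_of_mem_convexHull_image (mem_convexHull_farthest hc)
  have hR : 0 ≤ R := enclosingRadius_nonneg r c
  have hS : ∑ x, (w x / R) • (r x - c) = 0 := by
    simp_rw [div_eq_mul_inv, mul_comm (w _), mul_smul]
    simp [← Finset.smul_sum, smul_sub, Finset.sum_sub_distrib, ← Finset.sum_smul, hw1, hwc]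
  -- For `R = 0` all `S x` are `0` by the convention `w x / 0 = 0`, and they are still optimal.
  refine ⟨w, fun x => (w x / R) • (r x - c), fun x => ?_, hw1, hS, ?_⟩
  · rw [norm_smul, Real.norm_of_nonneg (div_nonneg (hw0 x) hR), norm_sub_rev, div_mul_eq_mul_div,
      mul_div_assoc]
    exact mul_le_of_le_one_right (hw0 x) (div_le_one_of_le₀ (norm_sub_le_enclosingRadius r c x) hR)
  · rw [← sum_inner_sub_eq_sum_inner r hS c]
    calc ∑ x, ⟪(w x / R) • (r x - c), r x - c⟫ = ∑ x, w x * R := by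
          refine Finset.sum_congr rfl fun x _ => ?_
          rw [real_inner_smul_left, real_inner_self_eq_norm_sq, norm_sub_rev]
          by_cases hx : w x = 0
          · simp [hx]
          rw [show ‖c - r x‖ = R from hwT x hx]
          by_cases hR0 : R = 0
          · simp [hR0]
          · field_simp
      _ = R := by rw [← Finset.sum_mul, hw1, one_mul]

lemma iInf_enclosingRadius_eq {r : ι → E} {c : E}
    (hc : ∀ s, enclosingRadius r c ≤ enclosingRadius r s) :
    ⨅ s, enclosingRadius r s = enclosingRadius r c :=
  le_antisymm (ciInf_le ⟨0, Set.forall_mem_range.2 (enclosingRadius_nonneg r)⟩ c) (le_ciInf hc)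

end MinimalEnclosingBall

section Bloch

open Matrix

lemma real_inner_fin_three (s t : EuclideanSpace ℝ (Fin 3)) :
    ⟪s, t⟫ = s 0 * t 0 + s 1 * t 1 + s 2 * t 2 := by
  simp [PiLp.inner_apply, Fin.sum_univ_three, mul_comm]

lemma norm_sq_fin_three (s : EuclideanSpace ℝ (Fin 3)) :
    ‖s‖ ^ 2 = s 0 ^ 2 + s 1 ^ 2 + s 2 ^ 2 := by
  simp [EuclideanSpace.real_norm_sq_eq, Fin.sum_univ_three]

lemma blochMat_eq_of (p : ℝ) (s : EuclideanSpace ℝ (Fin 3)) :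
    blochMat p s = !![((p : ℂ) + s 2) / 2, (s 0 - s 1 * Complex.I) / 2;
      (s 0 + s 1 * Complex.I) / 2, (p - s 2) / 2] := by
  ext i j
  fin_cases i <;> fin_cases j <;>
    simp [blochMat, pauli1, pauli2, pauli3] <;> ring

lemma blochMat_add (p q : ℝ) (s t : EuclideanSpace ℝ (Fin 3)) :
    blochMat p s + blochMat q t = blochMat (p + q) (s + t) := by
  simp only [blochMat, PiLp.add_apply, Complex.ofReal_add]
  module

lemma blochMat_sum {ι : Type*} (u : Finset ι) (p : ι → ℝ) (s : ι → EuclideanSpace ℝ (Fin 3)) :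
    ∑ x ∈ u, blochMat (p x) (s x) = blochMat (∑ x ∈ u, p x) (∑ x ∈ u, s x) := by
  induction u using Finset.cons_induction with
  | empty => simp [blochMat]
  | cons a u ha ih => rw [Finset.sum_cons, Finset.sum_cons, Finset.sum_cons, ih, blochMat_add]

lemma blochMat_two_zero : blochMat 2 0 = 1 := by
  rw [blochMat_eq_of, one_fin_two]
  norm_num

lemma blochMat_inj {p q : ℝ} {s t : EuclideanSpace ℝ (Fin 3)} :
    blochMat p s = blochMat q t ↔ p = q ∧ s = t := by
  refine ⟨fun h => ?_, fun ⟨hp, hs⟩ => hp ▸ hs ▸ rfl⟩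
  rw [blochMat_eq_of, blochMat_eq_of] at h
  have h00 := congrFun (congrFun h 0) 0
  have h01 := congrFun (congrFun h 0) 1
  have h11 := congrFun (congrFun h 1) 1
  simp [Complex.ext_iff] at h00 h01 h11
  refine ⟨by linarith, PiLp.ext fun i => ?_⟩
  fin_cases i <;> simp <;> linarith

lemma re_trace_blochMat_mul (p q : ℝ) (s t : EuclideanSpace ℝ (Fin 3)) :
    ((blochMat p s * blochMat q t).trace).re = (p * q + ⟪s, t⟫) / 2 := by
  rw [blochMat_eq_of, blochMat_eq_of, real_inner_fin_three]
  simp [trace_fin_two]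
  ring

lemma exists_blochMat_eq {E : Matrix (Fin 2) (Fin 2) ℂ} (hE : E.IsHermitian) :
    ∃ p s, blochMat p s = E := by
  have h00 := hE.apply 0 0
  have h11 := hE.apply 1 1
  have h10 := hE.apply 1 0
  refine ⟨(E 0 0).re + (E 1 1).re, !₂[2 * (E 0 1).re, -2 * (E 0 1).im, (E 0 0).re - (E 1 1).re],
    ?_⟩
  rw [blochMat_eq_of]
  simp only [Complex.ext_iff, Complex.star_def, Complex.conj_re, Complex.conj_im] at h00 h11 h10
  ext i j
  fin_cases i <;> fin_cases j <;> simp [Complex.ext_iff] <;> (try constructor) <;> linarith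

lemma isHermitian_blochMat (p : ℝ) (s : EuclideanSpace ℝ (Fin 3)) :
    (blochMat p s).IsHermitian := by
  rw [IsHermitian, blochMat_eq_of]
  ext i j
  fin_cases i <;> fin_cases j <;> simp [Complex.ext_iff]

lemma trace_blochMat (p : ℝ) (s : EuclideanSpace ℝ (Fin 3)) : (blochMat p s).trace = p := by
  simp [blochMat_eq_of, trace_fin_two]
  ring

lemma det_blochMat (p : ℝ) (s : EuclideanSpace ℝ (Fin 3)) :
    (blochMat p s).det = ((p ^ 2 - ‖s‖ ^ 2) / 4 : ℝ) := by
  rw [blochMat_eq_of, det_fin_two_of, norm_sq_fin_three]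
  push_cast
  ring_nf
  rw [Complex.I_sq]
  ring

/-- The Bloch vector of the pure state `v`:
`vecMulVec v (star v) = blochMat (normSq (v 0) + normSq (v 1)) (blochVec v)`. -/
def blochVec (v : Fin 2 → ℂ) : EuclideanSpace ℝ (Fin 3) :=
  !₂[2 * (star (v 0) * v 1).re, 2 * (star (v 0) * v 1).im,
    Complex.normSq (v 0) - Complex.normSq (v 1)]

lemma norm_blochVec (v : Fin 2 → ℂ) :
    ‖blochVec v‖ = Complex.normSq (v 0) + Complex.normSq (v 1) := by
  refine (sq_eq_sq₀ (norm_nonneg _)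
    (add_nonneg (Complex.normSq_nonneg _) (Complex.normSq_nonneg _))).1 ?_
  rw [norm_sq_fin_three]
  simp [blochVec, Complex.normSq_apply]
  ring

lemma re_star_dotProduct_blochMat_mulVec (p : ℝ) (s : EuclideanSpace ℝ (Fin 3))
    (v : Fin 2 → ℂ) : (star v ⬝ᵥ blochMat p s *ᵥ v).re
      = (p * (Complex.normSq (v 0) + Complex.normSq (v 1)) + ⟪s, blochVec v⟫) / 2 := by
  rw [blochMat_eq_of, real_inner_fin_three]
  simp [dotProduct, mulVec, Fin.sum_univ_two, blochVec, Complex.normSq_apply]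
  ring

lemma posSemidef_blochMat_iff {p : ℝ} {s : EuclideanSpace ℝ (Fin 3)} :
    (blochMat p s).PosSemidef ↔ ‖s‖ ≤ p := by
  constructor
  · intro h
    have htr := h.trace_nonneg
    have hdet := h.det_nonneg
    rw [trace_blochMat, Complex.zero_le_real] at htr
    rw [det_blochMat, Complex.zero_le_real] at hdet
    exact (pow_le_pow_iff_left₀ (norm_nonneg s) htr two_ne_zero).1 (by linarith)
  · intro h
    refine .of_dotProduct_mulVec_nonneg (isHermitian_blochMat p s) fun v => ?_
    refine Complex.nonneg_iff.2
      ⟨?_, ((isHermitian_blochMat p s).im_star_dotProduct_mulVec_self v).symm⟩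
    have hcs := neg_le_of_abs_le (abs_real_inner_le_norm s (blochVec v))
    rw [norm_blochVec] at hcs
    rw [re_star_dotProduct_blochMat_mulVec]
    have := add_nonneg (Complex.normSq_nonneg (v 0)) (Complex.normSq_nonneg (v 1))
    nlinarith

lemma sum_blochMat_eq_one_iff {ι : Type*} (u : Finset ι) (P : ι → ℝ)
    (S : ι → EuclideanSpace ℝ (Fin 3)) :
    ∑ x ∈ u, blochMat (P x) (S x) = 1 ↔ ∑ x ∈ u, P x = 2 ∧ ∑ x ∈ u, S x = 0 := by
  rw [blochMat_sum, ← blochMat_two_zero, blochMat_inj]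

lemma sum_re_trace_blochMat_mul {ι : Type*} (u : Finset ι) (P : ι → ℝ)
    (S r : ι → EuclideanSpace ℝ (Fin 3)) (q : ℝ) :
    ∑ x ∈ u, ((blochMat (P x) (S x) * blochMat q (r x)).trace).re
      = ((∑ x ∈ u, P x) * q + ∑ x ∈ u, ⟪S x, r x⟫) / 2 := by
  simp only [re_trace_blochMat_mul, ← Finset.sum_div, Finset.sum_add_distrib, Finset.sum_mul]

end Bloch

theorem qsd_equiprobable_minimal_enclosing_ball_general {X : Type*} [Fintype X] [Nonempty X]
    (m : ℕ)
    (r : X → EuclideanSpace ℝ (Fin 3))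
    (ρ : X → Matrix (Fin 2) (Fin 2) ℂ)
    (hρdef : ∀ x, ρ x = blochMat (1 / (m : ℝ)) (r x)) :
    sSup {p : ℝ | ∃ E : X → Matrix (Fin 2) (Fin 2) ℂ,
        (∀ x, (E x).PosSemidef) ∧ (∑ x, E x) = 1 ∧
        p = ∑ x, ((E x * ρ x).trace).re}
      = 1 / (m : ℝ)
        + ⨅ s : EuclideanSpace ℝ (Fin 3), Finset.univ.sup' Finset.univ_nonempty
            (fun x => ‖s - r x‖) := by
  obtain ⟨c, hc⟩ := exists_forall_enclosingRadius_le r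
  change _ = _ + ⨅ s, enclosingRadius r s
  rw [iInf_enclosingRadius_eq hc]
  simp_rw [hρdef]
  refine IsGreatest.csSup_eq ⟨?_, ?_⟩
  · obtain ⟨P, S, hSP, hP, hS, hval⟩ := exists_sum_inner_eq_enclosingRadius hc
    refine ⟨fun x => blochMat (2 * P x) ((2 : ℝ) • S x), fun x => posSemidef_blochMat_iff.2 ?_,
      (sum_blochMat_eq_one_iff _ _ _).2 ⟨?_, ?_⟩, ?_⟩
    · rw [norm_smul, Real.norm_two]
      exact mul_le_mul_of_nonneg_left (hSP x) zero_le_two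
    · rw [← Finset.mul_sum, hP, mul_one]
    · rw [← Finset.smul_sum, hS, smul_zero]
    · simp only [sum_re_trace_blochMat_mul, ← Finset.mul_sum, real_inner_smul_left, hP, hval]
      ring
  · rintro _ ⟨E, hE, hsum, rfl⟩
    choose P S hPS using fun x => exists_blochMat_eq (hE x).isHermitian
    simp only [← hPS, posSemidef_blochMat_iff] at hE hsum ⊢
    obtain ⟨hP, hS⟩ := (sum_blochMat_eq_one_iff _ _ _).1 hsum
    have hle := sum_inner_le_mul_enclosingRadius r hE hS c
    rw [hP] at hle
    rw [sum_re_trace_blochMat_mul, hP]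
    linarith

/-- Equiprobable qubit states and the minimal enclosing ball: if each of the `m` weighted
states is `ρ x = M(1/m, r x)`, then
`P_guess = 1/m + inf_{s ∈ ℝ³} max_{x} ‖s - r x‖`. -/
theorem qsd_equiprobable_minimal_enclosing_ball {X : Type*} [Fintype X] [Nonempty X]
    (m : ℕ) (hm : 1 ≤ m) (hcard : Fintype.card X = m)
    (r : X → EuclideanSpace ℝ (Fin 3))
    (ρ : X → Matrix (Fin 2) (Fin 2) ℂ)
    (hρdef : ∀ x, ρ x = blochMat (1 / (m : ℝ)) (r x))
    (hρ : ∀ x, (ρ x).PosSemidef)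
    (hρtr : (∑ x, (ρ x).trace) = 1) :
    sSup {p : ℝ | ∃ E : X → Matrix (Fin 2) (Fin 2) ℂ,
        (∀ x, (E x).PosSemidef) ∧ (∑ x, E x) = 1 ∧
        p = ∑ x, ((E x * ρ x).trace).re}
      = 1 / (m : ℝ)
        + ⨅ s : EuclideanSpace ℝ (Fin 3), Finset.univ.sup' Finset.univ_nonempty
            (fun x => ‖s - r x‖) :=
  qsd_equiprobable_minimal_enclosing_ball_general m r ρ hρdef
end
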